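/- For every integer n ≥ 2, ζ_ℤ'(−n + 1/2) = (4^{2n}/(2π n)) · binom(2n,n)^{-1} · (−4 log 2 − ∑_{k=1}^{n−1} 1/k + 2 ∑_{k=1}^{n} 1/(2k−1)). -/

import Mathlib

/-!
Logarithmic differentiation gives `ζ_ℤ'/ζ_ℤ (s) = ψ(1 - s) - ψ(1/2 - s) - log 4`, where `ψ` is
the digamma function. At `s = -n + 1/2` the digamma values are `ψ(n) = -γ + H_{n-1}` and
`ψ(n + 1/2) = -γ - 2 log 2 + 2 ∑_{k ≤ n} 1/(2k - 1)` (from `ψ(1/2)` by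
`ψ(s + 1) = ψ(s) + 1/s`), so Euler's constant cancels. The prefactor is `ζ_ℤ(-n + 1/2)`,
evaluated with `Γ(n + 1/2) = (2n)! √π / (4^n n!)`.
-/

noncomputable def zetaZ (s : ℂ) : ℂ :=
  Complex.Gamma (1/2 - s) / ((4:ℂ) ^ s * (Real.sqrt Real.pi : ℂ) * Complex.Gamma (1 - s))

open Complex Finset
open scoped Nat Real

local notation "γ" => Real.eulerMascheroniConstant

namespace Complex

lemma natCast_add_half_ne_neg_natCast (k m : ℕ) : (k : ℂ) + 1 / 2 ≠ -m := by
  intro h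
  have hre := congrArg re h
  simp only [add_re, natCast_re, div_ofNat_re, one_re, neg_re] at hre
  linarith [(k.cast_nonneg : (0 : ℝ) ≤ k), (m.cast_nonneg : (0 : ℝ) ≤ m)]

lemma natCast_add_one_ne_neg_natCast (k m : ℕ) : (k : ℂ) + 1 ≠ -m := by
  intro h
  have hre := congrArg re h
  simp only [add_re, natCast_re, one_re, neg_re] at hre
  linarith [(k.cast_nonneg : (0 : ℝ) ≤ k), (m.cast_nonneg : (0 : ℝ) ≤ m)]

lemma hasDerivAt_Gamma_mul_digamma {s : ℂ} (hs : ∀ m : ℕ, s ≠ -m) :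
    HasDerivAt Gamma (Gamma s * digamma s) s :=
  (differentiableAt_Gamma s hs).hasDerivAt.congr_deriv <| by
    rw [digamma_def, logDeriv_apply, mul_div_cancel₀ _ (Gamma_ne_zero hs)]

lemma digamma_natCast_add_one (n : ℕ) : digamma (n + 1) = -γ + harmonic n := by
  rw [digamma_def, logDeriv_apply, deriv_Gamma_nat, Gamma_nat_eq_factorial,
    mul_div_cancel_left₀ _ (by exact_mod_cast n.factorial_ne_zero)]

lemma digamma_natCast_add_half (k : ℕ) :
    digamma (k + 1 / 2) = -γ - 2 * log 2 + 2 * ∑ j ∈ Icc 1 k, 1 / (2 * (j : ℂ) - 1) := by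
  induction k with
  | zero =>
    rw [Nat.cast_zero, zero_add, digamma_one_half, Icc_eq_empty (by omega), sum_empty]
    ring
  | succ k ih =>
    have hinv : ((k : ℂ) + 1 / 2)⁻¹ = 2 * (1 / (2 * ((k + 1 : ℕ) : ℂ) - 1)) := by
      have h2k : 2 * (k : ℂ) + 1 ≠ 0 := by exact_mod_cast (2 * k).succ_ne_zero
      push_cast
      field_simp
      ring
    rw [Nat.cast_succ, add_right_comm, digamma_apply_add_one _ (natCast_add_half_ne_neg_natCast k),
      ih, hinv, sum_Icc_succ_top (by omega)]
    ring

lemma Gamma_natCast_add_half (k : ℕ) :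
    Gamma (k + 1 / 2) = (2 * k)! * √π / (4 ^ k * k !) := by
  induction k with
  | zero =>
    rw [Nat.cast_zero, zero_add, Gamma_one_half_eq, Real.sqrt_eq_rpow, ofReal_cpow Real.pi_nonneg]
    simp
  | succ k ih =>
    have hk : (k : ℂ) + 1 / 2 ≠ 0 := by simpa using natCast_add_half_ne_neg_natCast k 0
    rw [Nat.cast_succ, add_right_comm, Gamma_add_one _ hk, ih,
      show 2 * (k + 1) = 2 * k + 1 + 1 by ring, Nat.factorial_succ, Nat.factorial_succ,
      Nat.factorial_succ]
    push_cast
    field_simp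
    ring

lemma four_cpow_one_half : (4 : ℂ) ^ (1 / 2 : ℂ) = 2 := by
  have h : (4 : ℝ) ^ (1 / 2 : ℝ) = 2 := by
    rw [← Real.sqrt_eq_rpow, show (4 : ℝ) = 2 ^ 2 by norm_num, Real.sqrt_sq zero_le_two]
  have := ofReal_cpow (x := 4) (by norm_num) (1 / 2)
  rw [h] at this
  push_cast at this
  exact this.symm

lemma four_cpow_neg_natCast_add_half (n : ℕ) : (4 : ℂ) ^ (-(n : ℂ) + 1 / 2) = 2 / 4 ^ n := by
  rw [cpow_add _ _ (by norm_num), four_cpow_one_half, cpow_neg, cpow_natCast, div_eq_inv_mul]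

lemma log_four : log 4 = 2 * log 2 := by
  rw [← ofNat_log, ← ofNat_log, show (4 : ℝ) = 2 ^ 2 by norm_num, Real.log_pow]
  push_cast; ring

end Complex

lemma hasDerivAt_zetaZ {s : ℂ} (h₁ : ∀ m : ℕ, 1 / 2 - s ≠ -m)
    (h₂ : ∀ m : ℕ, 1 - s ≠ -m) :
    HasDerivAt zetaZ (zetaZ s * (digamma (1 - s) - digamma (1 / 2 - s) - log 4)) s := by
  have hnum : HasDerivAt (fun t ↦ Gamma (1 / 2 - t))
      (Gamma (1 / 2 - s) * digamma (1 / 2 - s) * -1) s :=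
    (hasDerivAt_Gamma_mul_digamma h₁).comp s ((hasDerivAt_id s).const_sub _)
  have hGamma : HasDerivAt (fun t ↦ Gamma (1 - t)) (Gamma (1 - s) * digamma (1 - s) * -1) s :=
    (hasDerivAt_Gamma_mul_digamma h₂).comp s ((hasDerivAt_id s).const_sub _)
  have hpow : HasDerivAt (fun t : ℂ ↦ (4 : ℂ) ^ t) (4 ^ s * log 4 * 1) s :=
    (hasDerivAt_id s).const_cpow (Or.inl (by norm_num))
  have hden := (hpow.mul_const (√π : ℂ)).mul hGamma
  have hsqrt : (√π : ℂ) ≠ 0 := ofReal_ne_zero.mpr (Real.sqrt_pos.mpr Real.pi_pos).ne'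
  have h4 : (4 : ℂ) ^ s ≠ 0 := cpow_ne_zero_iff.mpr (Or.inl (by norm_num))
  refine (hnum.div hden (mul_ne_zero (mul_ne_zero h4 hsqrt) (Gamma_ne_zero h₂))).congr_deriv ?_
  rw [zetaZ, Pi.mul_apply]
  field_simp
  ring

lemma zetaZ_neg_natCast_add_half {n : ℕ} (hn : n ≠ 0) :
    zetaZ (-n + 1 / 2) = 4 ^ (2 * n) / (2 * π * n) * (Nat.choose (2 * n) n : ℂ)⁻¹ := by
  obtain ⟨m, rfl⟩ : ∃ m, n = m + 1 := ⟨n - 1, by omega⟩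
  have h₁ : 1 / 2 - (-(↑(m + 1) : ℂ) + 1 / 2) = m + 1 := by push_cast; ring
  have h₂ : 1 - (-(↑(m + 1) : ℂ) + 1 / 2) = ↑(m + 1) + 1 / 2 := by ring
  have hπ : (√π : ℂ) * √π = π := by exact_mod_cast Real.mul_self_sqrt Real.pi_nonneg
  rw [zetaZ, h₁, h₂, Gamma_nat_eq_factorial, Gamma_natCast_add_half,
    four_cpow_neg_natCast_add_half, Nat.cast_choose ℂ (by omega : m + 1 ≤ 2 * (m + 1)),
    two_mul, Nat.add_sub_cancel, ← two_mul, Nat.factorial_succ, ← hπ]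
  push_cast
  field_simp
  ring

theorem deriv_zetaZ_neg_half (n : ℕ) (hn : 2 ≤ n) :
    deriv zetaZ (-(n : ℂ) + 1/2)
      = (4:ℂ) ^ (2 * n) / (2 * (Real.pi : ℂ) * n) * (Nat.choose (2 * n) n : ℂ)⁻¹
          * (-(4 * (Real.log 2 : ℂ)) - (∑ k ∈ Finset.Icc 1 (n - 1), 1 / (k : ℂ))
              + 2 * ∑ k ∈ Finset.Icc 1 n, 1 / (2 * (k : ℂ) - 1)) := by
  obtain ⟨m, rfl⟩ : ∃ m, n = m + 1 := ⟨n - 1, by omega⟩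
  have h₁ : 1 / 2 - (-(↑(m + 1) : ℂ) + 1 / 2) = m + 1 := by push_cast; ring
  have h₂ : 1 - (-(↑(m + 1) : ℂ) + 1 / 2) = ↑(m + 1) + 1 / 2 := by ring
  rw [(hasDerivAt_zetaZ (h₁ ▸ natCast_add_one_ne_neg_natCast m)
      (h₂ ▸ natCast_add_half_ne_neg_natCast _)).deriv,
    zetaZ_neg_natCast_add_half m.add_one_ne_zero, h₁, h₂, digamma_natCast_add_one,
    digamma_natCast_add_half, harmonic_eq_sum_Icc, Nat.add_sub_cancel, log_four, ofNat_log]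
  push_cast
  simp only [one_div]
  ring
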